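/- Let p ≡ 3 (mod 4) be prime, let (d,c) be a positive integer solution of d² - pc² = 1 with c ≥ 1, and let a, b be integers with b ≥ 1 odd, b | a² - p, and gcd(d+ac, cb) = 1. Then s(d+ac, cb) = s(d-ac, cb), where s denotes the Dedekind sum. -/

import Mathlib

/-- The sawtooth function `((x))`. -/
def dedekindSaw (x : ℚ) : ℚ := if Int.fract x = 0 then 0 else Int.fract x - 1/2

/-- The Dedekind sum `s(h,k) = ∑_{n=1}^{k} ((hn/k))((n/k))`. -/
noncomputable def dedekindSum (h k : ℤ) : ℚ :=
  ∑ n ∈ Finset.Icc (1 : ℤ) k, dedekindSaw ((h : ℚ) * n / k) * dedekindSaw ((n : ℚ) / k)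

/-!
By the Pell equation, `(d + ac)(d - ac) = d² - a²c² = 1 - c²(a² - p)`, and `cb ∣ c²(a² - p)`
because `b ∣ a² - p`; so `d - ac` is an inverse of `d + ac` modulo `cb`. The substitution
`n ↦ hn mod k` permutes the residues modulo `k` and turns the summands of `s(h, k)` into
those of `s(h', k)` whenever `hh' ≡ 1 (mod k)`, since both factors of the summand are
`k`-periodic in `n`.
-/

open Finset

lemma dedekindSaw_add_intCast (x : ℚ) (m : ℤ) : dedekindSaw (x + m) = dedekindSaw x := by
  rw [dedekindSaw, dedekindSaw, Int.fract_add_intCast]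

lemma dedekindSaw_intCast_div_of_modEq {k m n : ℤ} (hk : k ≠ 0) (hmn : m ≡ n [ZMOD k]) :
    dedekindSaw ((m : ℚ) / k) = dedekindSaw ((n : ℚ) / k) := by
  obtain ⟨t, ht⟩ := hmn.dvd
  have hm : (m : ℚ) = n - k * t := by exact_mod_cast (by linarith : m = n - k * t)
  have hdiv : (m : ℚ) / k = (n : ℚ) / k + (-t : ℤ) := by
    rw [hm]
    push_cast
    field_simp
    ring
  rw [hdiv, dedekindSaw_add_intCast]

lemma dedekindSaw_zero : dedekindSaw 0 = 0 := by
  simp [dedekindSaw]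

lemma dedekindSum_of_nonpos (h : ℤ) {k : ℤ} (hk : k ≤ 0) : dedekindSum h k = 0 := by
  rw [dedekindSum, Icc_eq_empty (by omega), sum_empty]

lemma dedekindSum_eq_sum_Ico (h : ℤ) {k : ℤ} (hk : 0 < k) :
    dedekindSum h k =
      ∑ n ∈ Ico 0 k, dedekindSaw (((h * n : ℤ) : ℚ) / k) * dedekindSaw ((n : ℚ) / k) := by
  have hIcc : Icc 1 k = insert k (Ioo 0 k) := by
    ext; simp only [mem_Icc, mem_insert, mem_Ioo]; omega
  have hsaw_k : dedekindSaw ((k : ℚ) / k) = 0 := by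
    rw [div_self (by exact_mod_cast hk.ne'), ← zero_add (1 : ℚ), ← Int.cast_one,
      dedekindSaw_add_intCast, dedekindSaw_zero]
  rw [dedekindSum, hIcc, sum_insert (by simp), hsaw_k, mul_zero, zero_add,
    ← Ioo_insert_left hk, sum_insert (by simp)]
  simp only [Int.cast_zero, zero_div, dedekindSaw_zero, mul_zero, zero_add, Int.cast_mul]

lemma mul_emod_modEq_of_mul_modEq_one {k u v : ℤ} (huv : u * v ≡ 1 [ZMOD k]) (n : ℤ) :
    u * (v * n % k) ≡ n [ZMOD k] :=
  calc u * (v * n % k) ≡ u * (v * n) [ZMOD k] := (Int.mod_modEq _ _).mul_left u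
    _ = (u * v) * n := (mul_assoc u v n).symm
    _ ≡ 1 * n [ZMOD k] := huv.mul_right n
    _ = n := one_mul n

theorem dedekindSum_eq_of_mul_modEq_one {h h' k : ℤ} (hmod : h * h' ≡ 1 [ZMOD k]) :
    dedekindSum h k = dedekindSum h' k := by
  rcases le_or_gt k 0 with hk | hk
  · rw [dedekindSum_of_nonpos h hk, dedekindSum_of_nonpos h' hk]
  have hmod' : h' * h ≡ 1 [ZMOD k] := mul_comm h h' ▸ hmod
  have mem : ∀ u n : ℤ, u * n % k ∈ Ico 0 k := fun u n =>
    mem_Ico.mpr ⟨Int.emod_nonneg _ hk.ne', Int.emod_lt_of_pos _ hk⟩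
  have cancel : ∀ {u v : ℤ}, u * v ≡ 1 [ZMOD k] → ∀ n ∈ Ico 0 k, u * (v * n % k) % k = n :=
    fun huv n hn => by
      obtain ⟨hn0, hnk⟩ := mem_Ico.mp hn
      rw [mul_emod_modEq_of_mul_modEq_one huv n, Int.emod_eq_of_lt hn0 hnk]
  rw [dedekindSum_eq_sum_Ico h hk, dedekindSum_eq_sum_Ico h' hk]
  refine sum_nbij' (fun n => h * n % k) (fun m => h' * m % k) (fun n _ => mem h n)
    (fun m _ => mem h' m) (cancel hmod') (cancel hmod) fun n _ => ?_
  rw [mul_comm, dedekindSaw_intCast_div_of_modEq hk.ne' (Int.mod_modEq (h * n) k),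
    dedekindSaw_intCast_div_of_modEq hk.ne' (mul_emod_modEq_of_mul_modEq_one hmod' n)]

theorem dedekindSum_eq_of_pell_general (p : ℕ) (d c : ℤ)
    (hpell : d ^ 2 - (p : ℤ) * c ^ 2 = 1)
    (a b : ℤ) (hdvd : b ∣ a ^ 2 - (p : ℤ)) :
    dedekindSum (d + a * c) (c * b) = dedekindSum (d - a * c) (c * b) := by
  apply dedekindSum_eq_of_mul_modEq_one
  obtain ⟨t, ht⟩ := hdvd
  exact Int.modEq_iff_dvd.mpr ⟨c * t, by linear_combination c ^ 2 * ht - hpell⟩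

theorem dedekindSum_eq_of_pell (p : ℕ) (hp : p.Prime) (hp4 : p % 4 = 3) (d c : ℤ)
    (hd : 0 < d) (hc : 1 ≤ c) (hpell : d ^ 2 - (p : ℤ) * c ^ 2 = 1)
    (a b : ℤ) (hb : 1 ≤ b) (hbodd : Odd b) (hdvd : b ∣ a ^ 2 - (p : ℤ))
    (hcop : Int.gcd (d + a * c) (c * b) = 1) :
    dedekindSum (d + a * c) (c * b) = dedekindSum (d - a * c) (c * b) :=
  dedekindSum_eq_of_pell_general p d c hpell a b hdvd
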